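/- The function F(t) = 1/(t²φ(t)²) + 1/((π−t)²φ(π−t)²) − (cos²t/sin²t)/φ(sin t)² + 2/φ(sin t), defined for t ∈ (0,π), satisfies lim_{t→0⁺} F(t) = 1/π² and lim_{t→π⁻} F(t) = 1/π² (hence F extends continuously to [0,π]). -/

import Mathlib

/-!
Near `0⁺` split `F(t)` into four terms. The term `1 / ((π - t)² φ(π - t)²)` is continuous at
`0` with value `1/π²` because `φ(π) = 1`, and `2 / φ(sin t) → 0`. Since `t ≤ tan t` and
`sin t ≤ t`, the quantity `1/t² - cot² t` lies in `[0, 1]`, so its quotient by `φ(sin t)²` tends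
to `0`. What remains is `(1/φ(t)² - 1/φ(sin t)²) / t²`, which is `O(1/φ(t)³)` because
`φ(sin t) - φ(t) = log (t / sin t) = O(t²)`. The limit at `π⁻` follows from `F(π - t) = F(t)`.
-/

open Real Set Filter Topology

noncomputable section

/-- `φ(t) = log (π e / t)`. -/
def phi (t : ℝ) : ℝ := Real.log (π * Real.exp 1 / t)

/-- The function `F` from the proof of Theorem 1. -/
def Ffun (t : ℝ) : ℝ :=
  1 / (t ^ 2 * phi t ^ 2) + 1 / ((π - t) ^ 2 * phi (π - t) ^ 2)
    - (Real.cos t ^ 2 / Real.sin t ^ 2) / phi (Real.sin t) ^ 2 + 2 / phi (Real.sin t)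

lemma phi_pi : phi π = 1 := by
  rw [phi, mul_div_cancel_left₀ _ pi_ne_zero, log_exp]

lemma phi_sub_phi {s t : ℝ} (hs : 0 < s) (ht : 0 < t) : phi s - phi t = log (t / s) := by
  have hc : π * exp 1 ≠ 0 := by positivity
  rw [phi, phi, log_div hc hs.ne', log_div hc ht.ne', log_div ht.ne' hs.ne']
  ring

lemma phi_le_phi {s t : ℝ} (hs : 0 < s) (hst : s ≤ t) : phi t ≤ phi s := by
  have := log_nonneg ((one_le_div hs).2 hst)
  linarith [phi_sub_phi hs (hs.trans_le hst)]

lemma one_le_phi {t : ℝ} (ht : 0 < t) (htπ : t ≤ π) : 1 ≤ phi t :=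
  phi_pi ▸ phi_le_phi ht htπ

lemma continuousAt_phi {t : ℝ} (ht : t ≠ 0) : ContinuousAt phi t :=
  (continuousAt_const.div continuousAt_id ht).log (div_ne_zero (by positivity) ht)

lemma tendsto_phi_nhdsGT_zero : Tendsto phi (𝓝[>] 0) atTop :=
  tendsto_log_atTop.comp (tendsto_inv_nhdsGT_zero.const_mul_atTop (by positivity))

lemma tendsto_sin_nhdsGT_zero : Tendsto sin (𝓝[>] 0) (𝓝[>] 0) := by
  refine tendsto_nhdsWithin_iff.2 ⟨?_, ?_⟩
  · simpa using continuous_sin.tendsto 0 |>.mono_left nhdsWithin_le_nhds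
  · filter_upwards [Ioo_mem_nhdsGT pi_pos] with t ht using sin_pos_of_pos_of_lt_pi ht.1 ht.2

lemma tendsto_const_sub_nhdsLT (a : ℝ) : Tendsto (a - ·) (𝓝[<] a) (𝓝[>] 0) := by
  refine tendsto_nhdsWithin_iff.2 ⟨?_, ?_⟩
  · simpa using (continuous_sub_left a).tendsto a |>.mono_left nhdsWithin_le_nhds
  · filter_upwards [self_mem_nhdsWithin] with t ht using sub_pos.2 (mem_Iio.1 ht)

lemma log_div_sin_le {t : ℝ} (h0 : 0 < t) (h1 : t ≤ π / 2) : log (t / sin t) ≤ t ^ 2 / 3 := by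
  have hjordan : 2 / π * t ≤ sin t := mul_le_sin h0.le h1
  have hs : 0 < sin t := lt_of_lt_of_le (by positivity) hjordan
  have hcube : t - sin t < t ^ 3 / 6 := by linarith [sin_gt_sub_cube h0]
  calc log (t / sin t) ≤ t / sin t - 1 := log_le_sub_one_of_pos (by positivity)
    _ = (t - sin t) / sin t := by field_simp
    _ ≤ (t ^ 3 / 6) / (2 / π * t) := by gcongr
    _ = π / 12 * t ^ 2 := by field_simp; ring
    _ ≤ t ^ 2 / 3 := by nlinarith [pi_lt_four, sq_nonneg t]

lemma one_div_sq_sub_one_div_sq_le {K : Type*} [Field K] [LinearOrder K] [IsStrictOrderedRing K]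
    {a b : K} (ha : 0 < a) (hab : a ≤ b) : 1 / a ^ 2 - 1 / b ^ 2 ≤ 2 * (b - a) / a ^ 3 := by
  have hb : 0 < b := ha.trans_le hab
  rw [div_sub_div _ _ (by positivity) (by positivity), div_le_div_iff₀ (by positivity) (by positivity)]
  nlinarith [mul_nonneg (sub_nonneg.2 hab) (sub_nonneg.2 hab), mul_pos ha hb, pow_pos ha 3, pow_pos hb 3,
    mul_nonneg (mul_nonneg (sub_nonneg.2 hab) (sub_nonneg.2 hab)) (pow_pos ha 3).le]

lemma one_div_sq_sub_cot_sq_mem_Icc {t : ℝ} (h0 : 0 < t) (h1 : t < π / 2) :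
    1 / t ^ 2 - cos t ^ 2 / sin t ^ 2 ∈ Icc 0 1 := by
  have hs : 0 < sin t := sin_pos_of_pos_of_lt_pi h0 (by linarith [pi_pos])
  have hc : 0 < cos t := cos_pos_of_mem_Ioo ⟨by linarith, h1⟩
  have htan : t ≤ tan t := (lt_tan h0 h1).le
  constructor
  · have : cos t ^ 2 / sin t ^ 2 = 1 / tan t ^ 2 := by rw [tan_eq_sin_div_cos]; field_simp
    rw [this, sub_nonneg]
    gcongr
  · have : cos t ^ 2 / sin t ^ 2 = 1 / sin t ^ 2 - 1 := by
      rw [cos_sq']; field_simp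
    rw [this]
    have : 1 / t ^ 2 ≤ 1 / sin t ^ 2 := by gcongr; exact (sin_lt h0).le
    linarith

lemma one_div_phi_sq_sub_one_div_phi_sin_sq_div_sq_mem_Icc {t : ℝ} (h0 : 0 < t) (h1 : t ≤ π / 2) :
    (1 / phi t ^ 2 - 1 / phi (sin t) ^ 2) / t ^ 2 ∈ Icc 0 (2 / 3 * (phi t ^ 3)⁻¹) := by
  have hs : 0 < sin t := sin_pos_of_pos_of_lt_pi h0 (by linarith [pi_pos])
  have hphi : 0 < phi t := one_pos.trans_le (one_le_phi h0 (by linarith [pi_pos]))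
  have hmono : phi t ≤ phi (sin t) := phi_le_phi hs (sin_lt h0).le
  have hdiff : phi (sin t) - phi t ≤ t ^ 2 / 3 := by
    rw [phi_sub_phi hs h0]; exact log_div_sin_le h0 h1
  constructor
  · have : 1 / phi (sin t) ^ 2 ≤ 1 / phi t ^ 2 := by gcongr
    exact div_nonneg (sub_nonneg.2 this) (sq_nonneg t)
  · calc (1 / phi t ^ 2 - 1 / phi (sin t) ^ 2) / t ^ 2
        ≤ 2 * (phi (sin t) - phi t) / phi t ^ 3 / t ^ 2 :=
          div_le_div_of_nonneg_right (one_div_sq_sub_one_div_sq_le hphi hmono) (sq_nonneg t)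
      _ ≤ 2 * (t ^ 2 / 3) / phi t ^ 3 / t ^ 2 := by gcongr
      _ = 2 / 3 * (phi t ^ 3)⁻¹ := by field_simp

lemma tendsto_one_div_phi_sq_sub_one_div_phi_sin_sq_div_sq :
    Tendsto (fun t => (1 / phi t ^ 2 - 1 / phi (sin t) ^ 2) / t ^ 2) (𝓝[>] 0) (𝓝 0) := by
  have hbound : Tendsto (fun t => 2 / 3 * (phi t ^ 3)⁻¹) (𝓝[>] 0) (𝓝 0) := by
    simpa using ((tendsto_pow_atTop three_ne_zero).comp tendsto_phi_nhdsGT_zero).inv_tendsto_atTop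
      |>.const_mul (2 / 3 : ℝ)
  have hmem : ∀ᶠ t in 𝓝[>] (0 : ℝ),
      (1 / phi t ^ 2 - 1 / phi (sin t) ^ 2) / t ^ 2 ∈ Icc 0 (2 / 3 * (phi t ^ 3)⁻¹) := by
    filter_upwards [Ioo_mem_nhdsGT (half_pos pi_pos)] with t ht
    exact one_div_phi_sq_sub_one_div_phi_sin_sq_div_sq_mem_Icc ht.1 ht.2.le
  exact squeeze_zero' (hmem.mono fun _ h => h.1) (hmem.mono fun _ h => h.2) hbound

lemma tendsto_one_div_sq_sub_cot_sq_div_phi_sin_sq :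
    Tendsto (fun t => (1 / t ^ 2 - cos t ^ 2 / sin t ^ 2) / phi (sin t) ^ 2) (𝓝[>] 0) (𝓝 0) := by
  have hbound : Tendsto (fun t => 1 / phi (sin t) ^ 2) (𝓝[>] 0) (𝓝 0) := by
    simpa [Function.comp_def, Pi.inv_def] using ((tendsto_pow_atTop two_ne_zero).comp
      (tendsto_phi_nhdsGT_zero.comp tendsto_sin_nhdsGT_zero)).inv_tendsto_atTop
  have hmem : ∀ᶠ t in 𝓝[>] (0 : ℝ), 1 / t ^ 2 - cos t ^ 2 / sin t ^ 2 ∈ Icc 0 1 := by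
    filter_upwards [Ioo_mem_nhdsGT (half_pos pi_pos)] with t ht
    exact one_div_sq_sub_cot_sq_mem_Icc ht.1 ht.2
  refine squeeze_zero' ?_ ?_ hbound
  · filter_upwards [hmem] with t ht using div_nonneg ht.1 (sq_nonneg _)
  · filter_upwards [hmem] with t ht using div_le_div_of_nonneg_right ht.2 (sq_nonneg _)

lemma tendsto_one_div_pi_sub_sq_mul_phi_sq :
    Tendsto (fun t => 1 / ((π - t) ^ 2 * phi (π - t) ^ 2)) (𝓝[>] 0) (𝓝 (1 / π ^ 2)) := by
  have hcont : ContinuousAt (fun t => 1 / ((π - t) ^ 2 * phi (π - t) ^ 2)) 0 := by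
    have hsub : ContinuousAt (π - ·) (0 : ℝ) := (continuous_sub_left π).continuousAt
    have hphi : ContinuousAt (fun t => phi (π - t)) 0 :=
      (continuousAt_phi pi_ne_zero).comp_of_eq hsub (sub_zero π)
    refine continuousAt_const.div ((hsub.pow 2).mul (hphi.pow 2)) ?_
    simp [phi_pi, pi_ne_zero]
  simpa [phi_pi] using hcont.tendsto.mono_left nhdsWithin_le_nhds

lemma tendsto_two_div_phi_sin : Tendsto (fun t => 2 / phi (sin t)) (𝓝[>] 0) (𝓝 0) := by
  simpa [div_eq_mul_inv] using
    (tendsto_phi_nhdsGT_zero.comp tendsto_sin_nhdsGT_zero).inv_tendsto_atTop.const_mul (2 : ℝ)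

lemma Ffun_eq_add (t : ℝ) : Ffun t = (1 / phi t ^ 2 - 1 / phi (sin t) ^ 2) / t ^ 2
    + (1 / t ^ 2 - cos t ^ 2 / sin t ^ 2) / phi (sin t) ^ 2
    + 1 / ((π - t) ^ 2 * phi (π - t) ^ 2) + 2 / phi (sin t) := by
  rw [Ffun]; ring

lemma Ffun_pi_sub (t : ℝ) : Ffun (π - t) = Ffun t := by
  simp only [Ffun, sin_pi_sub, cos_pi_sub, sub_sub_cancel]
  ring

lemma tendsto_Ffun_nhdsGT_zero : Tendsto Ffun (𝓝[>] 0) (𝓝 (1 / π ^ 2)) := by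
  have := ((tendsto_one_div_phi_sq_sub_one_div_phi_sin_sq_div_sq.add
    tendsto_one_div_sq_sub_cot_sq_div_phi_sin_sq).add tendsto_one_div_pi_sub_sq_mul_phi_sq).add
    tendsto_two_div_phi_sin
  simpa only [zero_add, add_zero, ← Ffun_eq_add] using this

/-- `F(t) → 1/π²` as `t → 0⁺` and as `t → π⁻`. -/
theorem Ffun_limits :
    Tendsto Ffun (𝓝[>] (0 : ℝ)) (𝓝 (1 / π ^ 2)) ∧
    Tendsto Ffun (𝓝[<] π) (𝓝 (1 / π ^ 2)) := by
  refine ⟨tendsto_Ffun_nhdsGT_zero, ?_⟩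
  simpa only [Function.comp_def, Ffun_pi_sub] using
    tendsto_Ffun_nhdsGT_zero.comp (tendsto_const_sub_nhdsLT π)
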